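/- arXiv:2506.11642 — 2 statements merged into one kernel-verified Lean document; each statement's English description precedes it below -/
import Mathlib

section
/- Under the Kustaanheimo–Stiefel position map x₁ = u₁u₃ + u₂u₄, x₂ = u₂u₃ − u₁u₄, x₃ = −u₁² − u₂² + u₃² + u₄², and the momentum map p₁ = −(u₁w₃ + w₁u₃ + u₂w₄ + w₂u₄)/r, p₂ = −(u₂w₃ + w₂u₃ − w₁u₄ − u₁w₄)/r, p₃ = (u₁w₁ + u₂w₂ − u₃w₃ − u₄w₄)/r with r = u₁² + u₂² + u₃² + u₄², if the constraint K = u₁w₂ − u₂w₁ + u₃w₄ − u₄w₃ = 0 holds and (u₁,u₂,u₃,u₄) ≠ 0, then r²(p₁² + p₂² + p₃²) = r(w₁² + w₂² + w₃² + w₄²), i.e. |x| · |p|² = |w|². -/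
/-- Under the Kustaanheimo–Stiefel transform, on the constraint surface K = 0 one has
  r²|p|² = r|w|², i.e. |x|·|p|² = |w|². -/
theorem ks_momentum_norm (u₁ u₂ u₃ u₄ w₁ w₂ w₃ w₄ : ℝ)
    (hK : u₁ * w₂ - u₂ * w₁ + u₃ * w₄ - u₄ * w₃ = 0)
    (hu : ¬(u₁ = 0 ∧ u₂ = 0 ∧ u₃ = 0 ∧ u₄ = 0)) :
    let r := u₁^2 + u₂^2 + u₃^2 + u₄^2
    let p₁ := -(u₁ * w₃ + w₁ * u₃ + u₂ * w₄ + w₂ * u₄) / r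
    let p₂ := -(u₂ * w₃ + w₂ * u₃ - w₁ * u₄ - u₁ * w₄) / r
    let p₃ := (u₁ * w₁ + u₂ * w₂ - u₃ * w₃ - u₄ * w₄) / r
    r^2 * (p₁^2 + p₂^2 + p₃^2) = r * (w₁^2 + w₂^2 + w₃^2 + w₄^2) := by
  intro r p₁ p₂ p₃
  have hr : u₁^2 + u₂^2 + u₃^2 + u₄^2 ≠ 0 := by
    intro h
    exact hu ⟨by nlinarith [sq_nonneg u₂, sq_nonneg u₃, sq_nonneg u₄],
      by nlinarith [sq_nonneg u₁, sq_nonneg u₃, sq_nonneg u₄],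
      by nlinarith [sq_nonneg u₁, sq_nonneg u₂, sq_nonneg u₄],
      by nlinarith [sq_nonneg u₁, sq_nonneg u₂, sq_nonneg u₃]⟩
  simp only [r, p₁, p₂, p₃]
  field_simp
  linear_combination (-(u₁ * w₂ - u₂ * w₁ + u₃ * w₄ - u₄ * w₃)) * hK
end

section
/- The Levi-Civita transform is symplectic up to the time reparametrization factor: for ξ = u₁² − u₃², η = 2u₁u₃ one has dξ ∧ dp_ξ + dη ∧ dp_η = du₁ ∧ dw₁ + du₃ ∧ dw₃ on the region u₁² + u₃² ≠ 0, where p_ξ = (u₁w₁ − u₃w₃)/(2(u₁²+u₃²)) and p_η = (u₁w₃ + u₃w₁)/(2(u₁²+u₃²)). -/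
/-- ξ = u₁² − u₃² as a function of q = (u₁, u₃, w₁, w₃). -/
def ξf (q : Fin 4 → ℝ) : ℝ := (q 0)^2 - (q 1)^2

/-- η = 2u₁u₃. -/
def ηf (q : Fin 4 → ℝ) : ℝ := 2 * q 0 * q 1

/-- p_ξ = (u₁w₁ − u₃w₃)/(2(u₁² + u₃²)). -/
noncomputable def pξf (q : Fin 4 → ℝ) : ℝ :=
  (q 0 * q 2 - q 1 * q 3) / (2 * ((q 0)^2 + (q 1)^2))

/-- p_η = (u₁w₃ + u₃w₁)/(2(u₁² + u₃²)). -/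
noncomputable def pηf (q : Fin 4 → ℝ) : ℝ :=
  (q 0 * q 3 + q 1 * q 2) / (2 * ((q 0)^2 + (q 1)^2))

section aux
variable (q v : Fin 4 → ℝ)

noncomputable abbrev pj (i : Fin 4) : (Fin 4 → ℝ) →L[ℝ] ℝ := ContinuousLinearMap.proj i

lemma hproj (i : Fin 4) : HasFDerivAt (fun p : Fin 4 → ℝ => p i) (pj i) q :=
  (pj i).hasFDerivAt

lemma hden : HasFDerivAt (fun p : Fin 4 → ℝ => 2 * ((p 0)^2 + (p 1)^2))
    ((2:ℝ) • ((q 0 • pj 0 + q 0 • pj 0) + (q 1 • pj 1 + q 1 • pj 1))) q := by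
  have h : HasFDerivAt (fun p : Fin 4 → ℝ => 2 * (p 0 * p 0 + p 1 * p 1))
      ((2:ℝ) • ((q 0 • pj 0 + q 0 • pj 0) + (q 1 • pj 1 + q 1 • pj 1))) q :=
    (((hproj q 0).mul (hproj q 0)).add ((hproj q 1).mul (hproj q 1))).const_mul 2
  convert h using 2 with p
  ring

lemma hdinv (hq : (q 0)^2 + (q 1)^2 ≠ 0) :
    HasFDerivAt (fun p : Fin 4 → ℝ => (2 * ((p 0)^2 + (p 1)^2))⁻¹)
    ((-((2 * ((q 0)^2 + (q 1)^2))^2)⁻¹) •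
      ((2:ℝ) • ((q 0 • pj 0 + q 0 • pj 0) + (q 1 • pj 1 + q 1 • pj 1)))) q := by
  have hd : (2 * ((q 0)^2 + (q 1)^2)) ≠ 0 := by
    simpa using hq
  exact (hasDerivAt_inv hd).comp_hasFDerivAt q (hden q)

lemma fderiv_ξ : fderiv ℝ ξf q v = 2 * q 0 * v 0 - 2 * q 1 * v 1 := by
  have h : HasFDerivAt (fun p : Fin 4 → ℝ => p 0 * p 0 - p 1 * p 1) _ q :=
    ((hproj q 0).mul (hproj q 0)).sub ((hproj q 1).mul (hproj q 1))
  have he : ξf = fun p : Fin 4 → ℝ => p 0 * p 0 - p 1 * p 1 := by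
    funext p; simp [ξf]; ring
  rw [he, h.fderiv]
  simp; ring

lemma fderiv_η : fderiv ℝ ηf q v = 2 * q 1 * v 0 + 2 * q 0 * v 1 := by
  have h : HasFDerivAt ηf _ q := ((hproj q 0).const_mul 2).mul (hproj q 1)
  rw [h.fderiv]
  simp; ring

lemma fderiv_pξ (hq : (q 0)^2 + (q 1)^2 ≠ 0) :
    fderiv ℝ pξf q v =
      (q 0 * v 2 + v 0 * q 2 - (q 1 * v 3 + v 1 * q 3)) * (2 * ((q 0)^2 + (q 1)^2))⁻¹
      - (q 0 * q 2 - q 1 * q 3) * ((2 * ((q 0)^2 + (q 1)^2))^2)⁻¹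
        * (2 * (2 * q 0 * v 0 + 2 * q 1 * v 1)) := by
  have h : HasFDerivAt pξf _ q :=
    (((hproj q 0).mul (hproj q 2)).sub ((hproj q 1).mul (hproj q 3))).mul (hdinv q hq)
  rw [h.fderiv]
  simp [div_eq_mul_inv]; ring

lemma fderiv_pη (hq : (q 0)^2 + (q 1)^2 ≠ 0) :
    fderiv ℝ pηf q v =
      (q 0 * v 3 + v 0 * q 3 + (q 1 * v 2 + v 1 * q 2)) * (2 * ((q 0)^2 + (q 1)^2))⁻¹
      - (q 0 * q 3 + q 1 * q 2) * ((2 * ((q 0)^2 + (q 1)^2))^2)⁻¹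
        * (2 * (2 * q 0 * v 0 + 2 * q 1 * v 1)) := by
  have h : HasFDerivAt pηf _ q :=
    (((hproj q 0).mul (hproj q 3)).add ((hproj q 1).mul (hproj q 2))).mul (hdinv q hq)
  rw [h.fderiv]
  simp [div_eq_mul_inv]; ring

end aux

/-- The Levi-Civita transform is symplectic: dξ ∧ dp_ξ + dη ∧ dp_η = du₁ ∧ dw₁ + du₃ ∧ dw₃
  on the region u₁² + u₃² ≠ 0, stated as an identity of 2-forms evaluated on pairs of
  tangent vectors v, v'. -/
theorem levi_civita_symplectic (q : Fin 4 → ℝ) (hq : (q 0)^2 + (q 1)^2 ≠ 0)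
    (v v' : Fin 4 → ℝ) :
    (fderiv ℝ ξf q v * fderiv ℝ pξf q v' - fderiv ℝ ξf q v' * fderiv ℝ pξf q v)
    + (fderiv ℝ ηf q v * fderiv ℝ pηf q v' - fderiv ℝ ηf q v' * fderiv ℝ pηf q v)
    = (v 0 * v' 2 - v' 0 * v 2) + (v 1 * v' 3 - v' 1 * v 3) := by
  rw [fderiv_ξ q v, fderiv_ξ q v', fderiv_η q v, fderiv_η q v',
    fderiv_pξ q v hq, fderiv_pξ q v' hq, fderiv_pη q v hq, fderiv_pη q v' hq]
  field_simp
  ring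
end
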